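/- arXiv:2309.01107 — 5 statements merged into one kernel-verified Lean document; each statement's English description precedes it below -/
import Mathlib

section
/- Fix a policy π, a nominal reward R₀ : S → A → ℝ, a radius α > 0, and p ∈ (1,∞) with Hölder conjugate q = p/(p-1). Define the worst-case reward R* : S → A → ℝ by R*(s,a) = R₀(s,a) - α * (d^π(s,a) / ‖d^π‖_q)^(q-1) (note ‖d^π‖_q > 0 since d^π(s) > 0 for every s). Then ‖R* - R₀‖_p = α, and for every R : S → A → ℝ with ‖R - R₀‖_p ≤ α one has ρ^π_{R*} ≤ ρ^π_R; that is, R* attains the minimum of the return ρ^π_R over the L_p ball of radius α around R₀. -/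
/-!
The occupation measure is strictly positive: if `x ᵥ* (1 - M) ≥ 0` for a nonnegative matrix `M`
with row sums `< 1`, then the negative part `x⁻` satisfies `∑ x⁻ ≤ ∑ᵢ x⁻ᵢ · (row sum i)`, which
forces `x⁻ = 0`. Applied to `±v` with `v ᵥ* (1 - M) = 0` this makes `1 - M` invertible, and
applied to `x = μ ᵥ* (1 - γ P^π)⁻¹` it gives `d^π = μ + d^π γ P^π ≥ μ > 0`.

Since `ρ^π_R - ρ^π_{R₀} = ∑ d^π (R - R₀)`, minimising the return over the ball is Hölder duality:
`∑ d^π (R - R₀) ≥ -‖d^π‖_q ‖R - R₀‖_p ≥ -α ‖d^π‖_q`, with equality for `R - R₀ = -α w` where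
`w = (d^π / ‖d^π‖_q)^(q-1)`, because `(q - 1) p = q` gives `‖w‖_p = 1` and `∑ d^π w = ‖d^π‖_q`.
-/

open Finset

noncomputable section

/-- `P^π(s,s') = ∑ a, π s a * P s a s'`. -/
def Pmat {S A : Type*} [Fintype A] (P : S → A → S → ℝ) (π : S → A → ℝ) :
    Matrix S S ℝ := fun s s' => ∑ a, π s a * P s a s'

/-- state occupation measure `d^π = μᵀ (I - γ P^π)⁻¹`. -/
def dPi {S A : Type*} [Fintype S] [Fintype A] [DecidableEq S]
    (γ : ℝ) (P : S → A → S → ℝ) (μ : S → ℝ) (π : S → A → ℝ) : S → ℝ :=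
  fun s' => ∑ s, μ s * (1 - γ • Pmat P π)⁻¹ s s'

/-- state-action occupation measure `d^π(s,a) = d^π(s) * π s a`. -/
def dSA {S A : Type*} [Fintype S] [Fintype A] [DecidableEq S]
    (γ : ℝ) (P : S → A → S → ℝ) (μ : S → ℝ) (π : S → A → ℝ) : S → A → ℝ :=
  fun s a => dPi γ P μ π s * π s a

/-- return `ρ^π_R = ∑_{s,a} d^π(s,a) * R(s,a)`. -/
def mdpReturn {S A : Type*} [Fintype S] [Fintype A] [DecidableEq S]
    (γ : ℝ) (P : S → A → S → ℝ) (μ : S → ℝ) (π : S → A → ℝ) (R : S → A → ℝ) : ℝ :=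
  ∑ s, ∑ a, dSA γ P μ π s a * R s a

/-- `‖x‖_r = (∑_{s,a} |x(s,a)|^r)^{1/r}` with real exponents via `Real.rpow`. -/
def LpNorm {S A : Type*} [Fintype S] [Fintype A] (r : ℝ) (x : S → A → ℝ) : ℝ :=
  (∑ s, ∑ a, |x s a| ^ r) ^ (1 / r)

end

open Matrix

section SubstochasticInverse

variable {n : Type*} [Fintype n] [DecidableEq n] {M : Matrix n n ℝ}

theorem nonneg_of_vecMul_one_sub_nonneg (hM : ∀ i j, 0 ≤ M i j)
    (hrow : ∀ i, ∑ j, M i j < 1) {x : n → ℝ} (hx : 0 ≤ x ᵥ* (1 - M)) : 0 ≤ x := by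
  have hslack : ∀ i, 0 < 1 - ∑ j, M i j := fun i => sub_pos.2 (hrow i)
  have hneg_le : ∀ j, (x j)⁻ ≤ ∑ i, (x i)⁻ * M i j := by
    intro j
    have hxj : ∑ i, x i * M i j ≤ x j := by
      have := hx j
      simp only [vecMul_sub, vecMul_one, Pi.sub_apply, Pi.zero_apply, sub_nonneg] at this
      exact this
    refine max_le ?_ (sum_nonneg fun i _ => mul_nonneg (negPart_nonneg _) (hM i j))
    calc -x j ≤ ∑ i, -x i * M i j := by simpa [neg_mul, sum_neg_distrib] using hxj
      _ ≤ ∑ i, (x i)⁻ * M i j :=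
        sum_le_sum fun i _ => mul_le_mul_of_nonneg_right (neg_le_negPart _) (hM i j)
  have hterm_nonneg : ∀ i, 0 ≤ (x i)⁻ * (1 - ∑ j, M i j) := fun i =>
    mul_nonneg (negPart_nonneg _) (hslack i).le
  have hsum : ∑ i, (x i)⁻ * (1 - ∑ j, M i j) = 0 := by
    refine le_antisymm ?_ (sum_nonneg fun i _ => hterm_nonneg i)
    calc ∑ i, (x i)⁻ * (1 - ∑ j, M i j) = ∑ j, (x j)⁻ - ∑ j, ∑ i, (x i)⁻ * M i j := by
          rw [sum_comm (f := fun j i => (x i)⁻ * M i j)]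
          simp only [mul_sub, mul_one, mul_sum, sum_sub_distrib]
      _ ≤ 0 := sub_nonpos.2 (sum_le_sum fun j _ => hneg_le j)
  intro i
  have hi := (sum_eq_zero_iff_of_nonneg fun i _ => hterm_nonneg i).1 hsum i (mem_univ i)
  exact negPart_eq_zero.1 ((mul_eq_zero.1 hi).resolve_right (hslack i).ne')

theorem det_one_sub_ne_zero (hM : ∀ i j, 0 ≤ M i j)
    (hrow : ∀ i, ∑ j, M i j < 1) : (1 - M).det ≠ 0 := by
  rintro hdet
  obtain ⟨v, hv, hvM⟩ := exists_vecMul_eq_zero_iff.2 hdet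
  have hpos : 0 ≤ v := nonneg_of_vecMul_one_sub_nonneg hM hrow hvM.ge
  have hneg : 0 ≤ -v := nonneg_of_vecMul_one_sub_nonneg hM hrow (by rw [neg_vecMul, hvM, neg_zero])
  exact hv (le_antisymm (neg_nonneg.1 hneg) hpos)

theorem le_vecMul_inv_one_sub (hM : ∀ i j, 0 ≤ M i j)
    (hrow : ∀ i, ∑ j, M i j < 1) {μ : n → ℝ} (hμ : 0 ≤ μ) : μ ≤ μ ᵥ* (1 - M)⁻¹ := by
  set x := μ ᵥ* (1 - M)⁻¹
  have hx : x ᵥ* (1 - M) = μ := by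
    rw [vecMul_vecMul, nonsing_inv_mul _ (det_one_sub_ne_zero hM hrow).isUnit, vecMul_one]
  have hx_nonneg : 0 ≤ x := nonneg_of_vecMul_one_sub_nonneg hM hrow (hx ▸ hμ)
  intro j
  have hxj : x j - (x ᵥ* M) j = μ j := by
    rw [← hx, vecMul_sub, vecMul_one, Pi.sub_apply]
  have : 0 ≤ (x ᵥ* M) j := sum_nonneg fun i _ => mul_nonneg (hx_nonneg i) (hM i j)
  linarith

end SubstochasticInverse

section OccupationMeasure

variable {S A : Type*} [Fintype S] [Fintype A]
  {γ : ℝ} {P : S → A → S → ℝ} {μ : S → ℝ} {π : S → A → ℝ}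

theorem sum_Pmat (hPsum : ∀ s a, ∑ s', P s a s' = 1) (hπsum : ∀ s, ∑ a, π s a = 1) (s : S) :
    ∑ s', Pmat P π s s' = 1 := by
  simp only [Pmat]
  rw [sum_comm]
  simp only [← mul_sum, hPsum, mul_one, hπsum]

theorem le_dPi [DecidableEq S] (hγ0 : 0 ≤ γ) (hγ1 : γ < 1) (hP : ∀ s a s', 0 ≤ P s a s')
    (hPsum : ∀ s a, ∑ s', P s a s' = 1) (hμ : 0 ≤ μ) (hπ : ∀ s a, 0 ≤ π s a)
    (hπsum : ∀ s, ∑ a, π s a = 1) (s : S) : μ s ≤ dPi γ P μ π s := by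
  have hM : ∀ i j, 0 ≤ (γ • Pmat P π) i j := fun i j =>
    mul_nonneg hγ0 (sum_nonneg fun a _ => mul_nonneg (hπ i a) (hP i a j))
  have hrow : ∀ i, ∑ j, (γ • Pmat P π) i j < 1 := fun i => by
    simpa only [Matrix.smul_apply, smul_eq_mul, ← mul_sum, sum_Pmat hPsum hπsum, mul_one]
      using hγ1
  exact le_vecMul_inv_one_sub hM hrow hμ s

theorem mdpReturn_sub_mdpReturn [DecidableEq S] (R R' : S → A → ℝ) :
    mdpReturn γ P μ π R - mdpReturn γ P μ π R' =
      ∑ s, ∑ a, dSA γ P μ π s a * (R s a - R' s a) := by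
  simp only [mdpReturn, mul_sub, sum_sub_distrib]

end OccupationMeasure

section LpNorm

variable {S A : Type*} [Fintype S] [Fintype A]

theorem LpNorm_sub_comm (r : ℝ) (x y : S → A → ℝ) :
    LpNorm r (fun s a => x s a - y s a) = LpNorm r (fun s a => y s a - x s a) := by
  simp only [LpNorm, abs_sub_comm]

theorem LpNorm_pos {r : ℝ} {x : S → A → ℝ} {s : S} {a : A} (hx : x s a ≠ 0) :
    0 < LpNorm r x := by
  refine Real.rpow_pos_of_pos ?_ _
  refine sum_pos' (fun s _ => sum_nonneg fun a _ => by positivity) ⟨s, mem_univ s, ?_⟩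
  exact sum_pos' (fun a _ => by positivity)
    ⟨a, mem_univ a, Real.rpow_pos_of_pos (abs_pos.2 hx) r⟩

theorem LpNorm_rpow {r : ℝ} (hr : r ≠ 0) (x : S → A → ℝ) :
    LpNorm r x ^ r = ∑ s, ∑ a, |x s a| ^ r := by
  rw [LpNorm, ← Real.rpow_mul (by positivity), one_div_mul_cancel hr, Real.rpow_one]

theorem LpNorm_const_mul {r : ℝ} (hr : 0 < r) (c : ℝ) (x : S → A → ℝ) :
    LpNorm r (fun s a => c * x s a) = |c| * LpNorm r x := by
  simp only [LpNorm, abs_mul, Real.mul_rpow (abs_nonneg c) (abs_nonneg _), ← mul_sum]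
  rw [Real.mul_rpow (by positivity) (by positivity), ← Real.rpow_mul (abs_nonneg c),
    mul_one_div_cancel hr.ne', Real.rpow_one]

theorem sum_mul_le_LpNorm_mul_LpNorm {p q : ℝ} (hpq : p.HolderConjugate q) (x y : S → A → ℝ) :
    ∑ s, ∑ a, x s a * y s a ≤ LpNorm p x * LpNorm q y := by
  have h := Real.inner_le_Lp_mul_Lq univ (fun z : S × A => x z.1 z.2) (fun z => y z.1 z.2) hpq
  rwa [Fintype.sum_prod_type' (fun s a => x s a * y s a),
    Fintype.sum_prod_type' (fun s a => |x s a| ^ p),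
    Fintype.sum_prod_type' (fun s a => |y s a| ^ q)] at h

section Dual

variable {p q : ℝ} {d : S → A → ℝ}

theorem sum_div_LpNorm_rpow (hq : 0 < q) (hd : ∀ s a, 0 ≤ d s a) (hN : 0 < LpNorm q d) :
    ∑ s, ∑ a, (d s a / LpNorm q d) ^ q = 1 := by
  simp only [Real.div_rpow (hd _ _) hN.le, ← sum_div]
  rw [div_eq_one_iff_eq (Real.rpow_pos_of_pos hN q).ne', LpNorm_rpow hq.ne']
  simp only [abs_of_nonneg (hd _ _)]

theorem sum_mul_div_LpNorm_rpow_sub_one (hq : 0 < q) (hd : ∀ s a, 0 ≤ d s a)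
    (hN : 0 < LpNorm q d) :
    ∑ s, ∑ a, d s a * (d s a / LpNorm q d) ^ (q - 1) = LpNorm q d := by
  have hterm : ∀ s a, d s a * (d s a / LpNorm q d) ^ (q - 1) =
      LpNorm q d * (d s a / LpNorm q d) ^ q := fun s a => by
    have hw : 0 ≤ d s a / LpNorm q d := div_nonneg (hd s a) hN.le
    have hsplit : (d s a / LpNorm q d) ^ q =
        d s a / LpNorm q d * (d s a / LpNorm q d) ^ (q - 1) := by
      rw [← Real.rpow_one_add' hw (by linarith), add_sub_cancel]
    rw [hsplit, ← mul_assoc, mul_div_cancel₀ _ hN.ne']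
  simp only [hterm, ← mul_sum, sum_div_LpNorm_rpow hq hd hN, mul_one]

theorem LpNorm_div_LpNorm_rpow_sub_one (hpq : p.HolderConjugate q) (hd : ∀ s a, 0 ≤ d s a)
    (hN : 0 < LpNorm q d) :
    LpNorm p (fun s a => (d s a / LpNorm q d) ^ (q - 1)) = 1 := by
  have hw : ∀ s a, 0 ≤ d s a / LpNorm q d := fun s a => div_nonneg (hd s a) hN.le
  rw [LpNorm]
  simp only [abs_of_nonneg (Real.rpow_nonneg (hw _ _) _), ← Real.rpow_mul (hw _ _),
    hpq.symm.sub_one_mul_conj, sum_div_LpNorm_rpow hpq.symm.pos hd hN, Real.one_rpow]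

end Dual

end LpNorm

theorem stmt_1_general {S A : Type*} [Fintype S] [Fintype A] [Nonempty S] [DecidableEq S]
    (γ : ℝ) (hγ0 : 0 ≤ γ) (hγ1 : γ < 1)
    (P : S → A → S → ℝ) (hP : ∀ s a s', 0 ≤ P s a s')
    (hPsum : ∀ s a, ∑ s', P s a s' = 1)
    (μ : S → ℝ) (hμ : ∀ s, 0 < μ s)
    (π : S → A → ℝ) (hπ : ∀ s a, 0 ≤ π s a) (hπsum : ∀ s, ∑ a, π s a = 1)
    (R₀ : S → A → ℝ) (α : ℝ) (hα : 0 < α)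
    (p q : ℝ) (hp : 1 < p) (hq : q = p / (p - 1))
    (Rstar : S → A → ℝ)
    (hRstar : ∀ s a, Rstar s a =
      R₀ s a - α * (dSA γ P μ π s a / LpNorm q (dSA γ P μ π)) ^ (q - 1)) :
    LpNorm p (fun s a => Rstar s a - R₀ s a) = α ∧
    ∀ R : S → A → ℝ, LpNorm p (fun s a => R s a - R₀ s a) ≤ α →
      mdpReturn γ P μ π Rstar ≤ mdpReturn γ P μ π R := by
  set d := dSA γ P μ π
  have hpq : p.HolderConjugate q := (Real.holderConjugate_iff_eq_conjExponent hp).2 hq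
  have hdPi : ∀ s, 0 < dPi γ P μ π s := fun s =>
    (hμ s).trans_le (le_dPi hγ0 hγ1 hP hPsum (fun s => (hμ s).le) hπ hπsum s)
  have hd : ∀ s a, 0 ≤ d s a := fun s a => mul_nonneg (hdPi s).le (hπ s a)
  have hN : 0 < LpNorm q d := by
    obtain ⟨s⟩ := ‹Nonempty S›
    obtain ⟨a, -, ha⟩ := exists_ne_zero_of_sum_ne_zero ((hπsum s).symm ▸ one_ne_zero)
    exact LpNorm_pos (mul_ne_zero (hdPi s).ne' ha)
  have hdev : (fun s a => Rstar s a - R₀ s a) =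
      fun s a => -α * (d s a / LpNorm q d) ^ (q - 1) := by
    funext s a
    rw [hRstar]
    ring
  refine ⟨?_, fun R hR => ?_⟩
  · rw [hdev, LpNorm_const_mul hpq.pos, LpNorm_div_LpNorm_rpow_sub_one hpq hd hN, abs_neg,
      abs_of_pos hα, mul_one]
  have hworst : mdpReturn γ P μ π Rstar - mdpReturn γ P μ π R₀ = -(α * LpNorm q d) := by
    rw [mdpReturn_sub_mdpReturn, ← sum_mul_div_LpNorm_rpow_sub_one hpq.symm.pos hd hN, mul_sum]
    simp only [fun s a => congrFun (congrFun hdev s) a, neg_mul, mul_neg, sum_neg_distrib,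
      mul_sum, mul_left_comm α]
    rfl
  have hholder : ∑ s, ∑ a, d s a * (R₀ s a - R s a) ≤ LpNorm q d * α :=
    (sum_mul_le_LpNorm_mul_LpNorm hpq.symm d _).trans
      (mul_le_mul_of_nonneg_left (LpNorm_sub_comm p R₀ R ▸ hR) hN.le)
  have hreturn := mdpReturn_sub_mdpReturn (γ := γ) (P := P) (μ := μ) (π := π) R₀ R
  linarith

theorem stmt_1 {S A : Type*} [Fintype S] [Fintype A] [Nonempty S] [Nonempty A] [DecidableEq S]
    (γ : ℝ) (hγ0 : 0 ≤ γ) (hγ1 : γ < 1)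
    (P : S → A → S → ℝ) (hP : ∀ s a s', 0 ≤ P s a s')
    (hPsum : ∀ s a, ∑ s', P s a s' = 1)
    (μ : S → ℝ) (hμ : ∀ s, 0 < μ s) (hμsum : ∑ s, μ s = 1)
    (π : S → A → ℝ) (hπ : ∀ s a, 0 ≤ π s a) (hπsum : ∀ s, ∑ a, π s a = 1)
    (R₀ : S → A → ℝ) (α : ℝ) (hα : 0 < α)
    (p q : ℝ) (hp : 1 < p) (hq : q = p / (p - 1))
    (Rstar : S → A → ℝ)
    (hRstar : ∀ s a, Rstar s a =
      R₀ s a - α * (dSA γ P μ π s a / LpNorm q (dSA γ P μ π)) ^ (q - 1)) :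
    LpNorm p (fun s a => Rstar s a - R₀ s a) = α ∧
    ∀ R : S → A → ℝ, LpNorm p (fun s a => R s a - R₀ s a) ≤ α →
      mdpReturn γ P μ π Rstar ≤ mdpReturn γ P μ π R :=
  stmt_1_general γ hγ0 hγ1 P hP hPsum μ hμ π hπ hπsum R₀ α hα p q hp hq Rstar hRstar
end

section
/- Fix a policy π, a nominal reward R₀ : S → A → ℝ, and α > 0. For the L_∞ reward uncertainty set {R : S → A → ℝ | ∀ s a, |R(s,a) - R₀(s,a)| ≤ α} (the case p = ∞, q = 1), the infimum of ρ^π_R over this set equals ρ^π_{R₀} - α * ∑_{s,a} d^π(s,a) = ρ^π_{R₀} - α/(1-γ), and it is attained at the uniformly penalized reward R(s,a) = R₀(s,a) - α. In particular ∑_{s,a} d^π(s,a) = 1/(1-γ). -/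
open Finset

/-!
With `Q = P^π` row-stochastic and `0 ≤ γ < 1`, the matrix `1 - γ • Q` obeys a discrete minimum
principle: `(1 - γ • Q) x ≥ 0` forces `x ≥ 0`. Hence it is invertible with an entrywise
nonnegative inverse, and since `(1 - γ • Q) 1 = (1 - γ) 1` every row of the inverse sums to
`1 / (1 - γ)`. So `d^π` is a nonnegative measure of total mass `1 / (1 - γ)`, the return is
monotone in the reward, and every reward of the uncertainty set dominates `R₀ - α` pointwise.
-/

open Finset Matrix

namespace Matrix

variable {n : Type*} [Fintype n] [DecidableEq n] {Q : Matrix n n ℝ} {γ : ℝ}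

theorem nonneg_of_one_sub_smul_mulVec_nonneg (hQ : Q ∈ rowStochastic ℝ n) (hγ0 : 0 ≤ γ)
    (hγ1 : γ < 1) {x : n → ℝ} (hx : 0 ≤ (1 - γ • Q) *ᵥ x) : 0 ≤ x := by
  intro s
  obtain ⟨s₀, -, hmin⟩ := exists_min_image univ x ⟨s, mem_univ s⟩
  have hQx : x s₀ ≤ (Q *ᵥ x) s₀ := by
    have hdiff := nonneg_mulVec_of_mem_rowStochastic hQ
      (x := x - x s₀ • 1) (fun t => sub_nonneg.2 (by simpa using hmin t (mem_univ t))) s₀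
    rw [mulVec_sub, mulVec_smul, one_vecMul_of_mem_rowStochastic hQ] at hdiff
    simpa using hdiff
  have hrow : 0 ≤ x s₀ - γ * (Q *ᵥ x) s₀ := by
    simpa [sub_mulVec, smul_mulVec] using hx s₀
  have hs₀ : 0 ≤ x s₀ := by nlinarith
  exact hs₀.trans (hmin s (mem_univ s))

theorem det_one_sub_smul_ne_zero (hQ : Q ∈ rowStochastic ℝ n) (hγ0 : 0 ≤ γ) (hγ1 : γ < 1) :
    (1 - γ • Q).det ≠ 0 := by
  intro hdet
  obtain ⟨v, hv, hMv⟩ := exists_mulVec_eq_zero_iff.2 hdet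
  have hpos := nonneg_of_one_sub_smul_mulVec_nonneg hQ hγ0 hγ1 hMv.ge
  have hneg := nonneg_of_one_sub_smul_mulVec_nonneg hQ hγ0 hγ1 (x := -v) (by rw [mulVec_neg, hMv, neg_zero])
  exact hv (le_antisymm (by simpa using hneg) hpos)

theorem isUnit_det_one_sub_smul (hQ : Q ∈ rowStochastic ℝ n) (hγ0 : 0 ≤ γ) (hγ1 : γ < 1) :
    IsUnit (1 - γ • Q).det :=
  isUnit_iff_ne_zero.2 (det_one_sub_smul_ne_zero hQ hγ0 hγ1)

theorem one_sub_smul_inv_nonneg (hQ : Q ∈ rowStochastic ℝ n) (hγ0 : 0 ≤ γ) (hγ1 : γ < 1)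
    (i j : n) : 0 ≤ (1 - γ • Q)⁻¹ i j := by
  have hcol : 0 ≤ (1 - γ • Q)⁻¹ *ᵥ Pi.single j 1 := by
    refine nonneg_of_one_sub_smul_mulVec_nonneg hQ hγ0 hγ1 ?_
    rw [mulVec_mulVec, mul_nonsing_inv _ (isUnit_det_one_sub_smul hQ hγ0 hγ1), one_mulVec]
    exact Pi.single_nonneg.2 zero_le_one
  rw [mulVec_single_one] at hcol
  exact hcol i

theorem one_sub_smul_inv_mulVec_one (hQ : Q ∈ rowStochastic ℝ n) (hγ0 : 0 ≤ γ) (hγ1 : γ < 1) :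
    (1 - γ • Q)⁻¹ *ᵥ 1 = (1 - γ)⁻¹ • 1 := by
  have hM : (1 - γ • Q) *ᵥ 1 = (1 - γ) • 1 := by
    rw [sub_mulVec, smul_mulVec, one_vecMul_of_mem_rowStochastic hQ, one_mulVec, sub_smul,
      one_smul]
  rw [← inv_smul_smul₀ (sub_ne_zero.2 hγ1.ne') ((1 - γ • Q)⁻¹ *ᵥ 1), ← mulVec_smul, ← hM,
    mulVec_mulVec, nonsing_inv_mul _ (isUnit_det_one_sub_smul hQ hγ0 hγ1), one_mulVec]

end Matrix

section MDP

variable {S A : Type*} [Fintype S] [Fintype A] [DecidableEq S]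
  {γ : ℝ} {P : S → A → S → ℝ} {μ : S → ℝ} {π : S → A → ℝ}

theorem Pmat_mem_rowStochastic (hP : ∀ s a s', 0 ≤ P s a s') (hPsum : ∀ s a, ∑ s', P s a s' = 1)
    (hπ : ∀ s a, 0 ≤ π s a) (hπsum : ∀ s, ∑ a, π s a = 1) :
    Pmat P π ∈ rowStochastic ℝ S := by
  refine mem_rowStochastic_iff_sum.2
    ⟨fun s s' => sum_nonneg fun a _ => mul_nonneg (hπ s a) (hP s a s'), fun s => ?_⟩
  simp only [Pmat]
  rw [sum_comm]
  simp [← mul_sum, hPsum, hπsum]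

theorem dPi_nonneg (hγ0 : 0 ≤ γ) (hγ1 : γ < 1) (hQ : Pmat P π ∈ rowStochastic ℝ S)
    (hμ : ∀ s, 0 ≤ μ s) (s : S) : 0 ≤ dPi γ P μ π s :=
  sum_nonneg fun t _ => mul_nonneg (hμ t) (one_sub_smul_inv_nonneg hQ hγ0 hγ1 t s)

theorem sum_dPi (hγ0 : 0 ≤ γ) (hγ1 : γ < 1) (hQ : Pmat P π ∈ rowStochastic ℝ S)
    (hμsum : ∑ s, μ s = 1) : ∑ s, dPi γ P μ π s = 1 / (1 - γ) := by
  have hrow := congrFun (one_sub_smul_inv_mulVec_one hQ hγ0 hγ1)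
  simp only [mulVec, dotProduct, Pi.one_apply, mul_one, Pi.smul_apply, smul_eq_mul] at hrow
  simp only [dPi]
  rw [sum_comm]
  simp [← mul_sum, hrow, ← sum_mul, hμsum]

theorem sum_dSA_eq_dPi (hπsum : ∀ s, ∑ a, π s a = 1) (s : S) :
    ∑ a, dSA γ P μ π s a = dPi γ P μ π s := by
  simp [dSA, ← mul_sum, hπsum]

theorem mdpReturn_sub_const (R : S → A → ℝ) (c : ℝ) :
    mdpReturn γ P μ π (fun s a => R s a - c) =
      mdpReturn γ P μ π R - c * ∑ s, ∑ a, dSA γ P μ π s a := by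
  simp only [mdpReturn, mul_sub, sum_sub_distrib, mul_sum]
  simp only [mul_comm c]

theorem mdpReturn_mono (hd : ∀ s a, 0 ≤ dSA γ P μ π s a) {R R' : S → A → ℝ}
    (hRR' : ∀ s a, R s a ≤ R' s a) : mdpReturn γ P μ π R ≤ mdpReturn γ P μ π R' :=
  sum_le_sum fun s _ => sum_le_sum fun a _ => mul_le_mul_of_nonneg_left (hRR' s a) (hd s a)

end MDP

theorem stmt_3_general {S A : Type*} [Fintype S] [Fintype A] [DecidableEq S]
    (γ : ℝ) (hγ0 : 0 ≤ γ) (hγ1 : γ < 1)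
    (P : S → A → S → ℝ) (hP : ∀ s a s', 0 ≤ P s a s')
    (hPsum : ∀ s a, ∑ s', P s a s' = 1)
    (μ : S → ℝ) (hμ : ∀ s, 0 < μ s) (hμsum : ∑ s, μ s = 1)
    (π : S → A → ℝ) (hπ : ∀ s a, 0 ≤ π s a) (hπsum : ∀ s, ∑ a, π s a = 1)
    (R₀ : S → A → ℝ) (α : ℝ) (hα : 0 < α) :
    IsLeast {r : ℝ | ∃ R : S → A → ℝ,
        (∀ s a, |R s a - R₀ s a| ≤ α) ∧ r = mdpReturn γ P μ π R}
      (mdpReturn γ P μ π R₀ - α * ∑ s, ∑ a, dSA γ P μ π s a) ∧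
    (∑ s, ∑ a, dSA γ P μ π s a) = 1 / (1 - γ) ∧
    mdpReturn γ P μ π (fun s a => R₀ s a - α) =
      mdpReturn γ P μ π R₀ - α * ∑ s, ∑ a, dSA γ P μ π s a := by
  have hQ := Pmat_mem_rowStochastic hP hPsum hπ hπsum
  have hd : ∀ s a, 0 ≤ dSA γ P μ π s a := fun s a =>
    mul_nonneg (dPi_nonneg hγ0 hγ1 hQ (fun t => (hμ t).le) s) (hπ s a)
  have hmass : ∑ s, ∑ a, dSA γ P μ π s a = 1 / (1 - γ) := by
    simp only [sum_dSA_eq_dPi hπsum, sum_dPi hγ0 hγ1 hQ hμsum]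
  have hval := mdpReturn_sub_const (γ := γ) (P := P) (μ := μ) (π := π) R₀ α
  refine ⟨⟨⟨_, fun s a => by simp [abs_of_pos hα], hval.symm⟩, ?_⟩, hmass, hval⟩
  rintro _ ⟨R, hR, rfl⟩
  rw [← hval]
  exact mdpReturn_mono hd fun s a => by linarith [(abs_le.1 (hR s a)).1]

theorem stmt_3 {S A : Type*} [Fintype S] [Fintype A] [Nonempty S] [Nonempty A] [DecidableEq S]
    (γ : ℝ) (hγ0 : 0 ≤ γ) (hγ1 : γ < 1)
    (P : S → A → S → ℝ) (hP : ∀ s a s', 0 ≤ P s a s')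
    (hPsum : ∀ s a, ∑ s', P s a s' = 1)
    (μ : S → ℝ) (hμ : ∀ s, 0 < μ s) (hμsum : ∑ s, μ s = 1)
    (π : S → A → ℝ) (hπ : ∀ s a, 0 ≤ π s a) (hπsum : ∀ s, ∑ a, π s a = 1)
    (R₀ : S → A → ℝ) (α : ℝ) (hα : 0 < α) :
    IsLeast {r : ℝ | ∃ R : S → A → ℝ,
        (∀ s a, |R s a - R₀ s a| ≤ α) ∧ r = mdpReturn γ P μ π R}
      (mdpReturn γ P μ π R₀ - α * ∑ s, ∑ a, dSA γ P μ π s a) ∧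
    (∑ s, ∑ a, dSA γ P μ π s a) = 1 / (1 - γ) ∧
    mdpReturn γ P μ π (fun s a => R₀ s a - α) =
      mdpReturn γ P μ π R₀ - α * ∑ s, ∑ a, dSA γ P μ π s a :=
  stmt_3_general γ hγ0 hγ1 P hP hPsum μ hμ hμsum π hπ hπsum R₀ α hα
end

section
/- Fix a policy π, a nominal reward R₀ : S → A → ℝ, α > 0, p ∈ (1,∞) with Hölder conjugate q = p/(p-1), and a weight function w : S → A → ℝ with w(s,a) > 0 for all (s,a). Define the weighted L_p norm ‖x‖_{w,p} = (∑_{s,a} w(s,a) * |x(s,a)|^p)^{1/p} and the reweighted occupation measure d̂(s,a) = d^π(s,a) / w(s,a)^{1/p}. Then the infimum of ρ^π_R over {R : S → A → ℝ | ‖R - R₀‖_{w,p} ≤ α} equals ρ^π_{R₀} - α * ‖d̂‖_q, and this infimum is attained. -/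
/-!
Substituting `R = R₀ + y / w^{1/p}` maps the weighted ball `‖R - R₀‖_{w,p} ≤ α` bijectively onto
the plain `L_p` ball of radius `α`, and by linearity of the return turns `ρ_R` into
`ρ_{R₀} + ⟨d̂, y⟩`. By Hölder's inequality a linear functional `⟨d̂, ·⟩` is at least
`-α ‖d̂‖_q` on that ball, with equality in the direction `-sign d̂ · |d̂|^{q-1}`.
-/

open Finset

/-- weighted `L_p` norm `‖x‖_{w,p} = (∑_{s,a} w(s,a) |x(s,a)|^p)^{1/p}`. -/
noncomputable def WNorm {S A : Type*} [Fintype S] [Fintype A]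
    (w : S → A → ℝ) (p : ℝ) (x : S → A → ℝ) : ℝ :=
  (∑ s, ∑ a, w s a * |x s a| ^ p) ^ (1 / p)

section
open Real

lemma mul_sign_mul_abs_rpow_sub_one {q : ℝ} (hq : q ≠ 0) (x : ℝ) :
    x * (SignType.sign x * |x| ^ (q - 1)) = |x| ^ q := by
  rcases eq_or_ne x 0 with rfl | hx
  · simp [zero_rpow hq]
  · rw [← mul_assoc, self_mul_sign, rpow_sub_one (abs_ne_zero.mpr hx),
      mul_div_cancel₀ _ (abs_ne_zero.mpr hx)]

lemma abs_sign_mul_abs_rpow_sub_one_rpow {p q : ℝ} (hpq : p.HolderConjugate q) (x : ℝ) :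
    |SignType.sign x * |x| ^ (q - 1)| ^ p = |x| ^ q := by
  rcases eq_or_ne x 0 with rfl | hx
  · simp [zero_rpow hpq.ne_zero, zero_rpow hpq.symm.ne_zero]
  · have hsign : |(SignType.sign x : ℝ)| = 1 := by
      rcases hx.lt_or_gt with h | h <;> simp [h]
    rw [abs_mul, hsign, one_mul, abs_of_nonneg (rpow_nonneg (abs_nonneg x) _),
      ← rpow_mul (abs_nonneg x), hpq.symm.sub_one_mul_conj]

variable {ι : Type*} [Fintype ι] {p q : ℝ}

lemma neg_Lq_mul_Lp_le_inner (hpq : p.HolderConjugate q) (d y : ι → ℝ) :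
    -((∑ i, |d i| ^ q) ^ (1 / q) * (∑ i, |y i| ^ p) ^ (1 / p)) ≤ ∑ i, d i * y i := by
  have h := inner_le_Lp_mul_Lq univ d (-y) hpq.symm
  simp only [Pi.neg_apply, mul_neg, sum_neg_distrib, abs_neg] at h
  linarith

lemma exists_Lp_le_inner_eq_neg_mul_Lq (hpq : p.HolderConjugate q) {α : ℝ} (hα : 0 ≤ α)
    (d : ι → ℝ) : ∃ y : ι → ℝ, (∑ i, |y i| ^ p) ^ (1 / p) ≤ α ∧
      ∑ i, d i * y i = -(α * (∑ i, |d i| ^ q) ^ (1 / q)) := by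
  set T := ∑ i, |d i| ^ q
  have hT : 0 ≤ T := sum_nonneg fun i _ => rpow_nonneg (abs_nonneg _) _
  rcases hT.eq_or_lt with hT0 | hTpos
  · refine ⟨0, ?_, ?_⟩
    · simpa [zero_rpow hpq.ne_zero, zero_rpow (inv_ne_zero hpq.ne_zero)] using hα
    · simp [← hT0, zero_rpow (inv_ne_zero hpq.symm.ne_zero)]
  set c := α / T ^ (1 / p)
  have hc : 0 ≤ c := div_nonneg hα (rpow_nonneg hT _)
  have hTp : T ^ (1 / p) ≠ 0 := (rpow_pos_of_pos hTpos _).ne'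
  refine ⟨fun i => -(c * (SignType.sign (d i) * |d i| ^ (q - 1))), le_of_eq ?_, ?_⟩
  · have habs (i : ι) : |-(c * (SignType.sign (d i) * |d i| ^ (q - 1)))| ^ p
        = c ^ p * |d i| ^ q := by
      rw [abs_neg, abs_mul, abs_of_nonneg hc, mul_rpow hc (abs_nonneg _),
        abs_sign_mul_abs_rpow_sub_one_rpow hpq]
    simp only [habs, ← mul_sum]
    rw [mul_rpow (rpow_nonneg hc _) hT, ← rpow_mul hc, mul_one_div_cancel hpq.ne_zero, rpow_one]
    exact div_mul_cancel₀ α hTp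
  · simp only [mul_neg, sum_neg_distrib, mul_left_comm (d _) c,
      mul_sign_mul_abs_rpow_sub_one hpq.symm.ne_zero, ← mul_sum]
    have hsplit : T = T ^ (1 / p) * T ^ (1 / q) := by
      rw [← rpow_add hTpos, hpq.one_div_add_one_div, one_div_one, rpow_one]
    calc -(c * T) = -(c * (T ^ (1 / p) * T ^ (1 / q))) := by rw [← hsplit]
      _ = -(α * T ^ (1 / q)) := by simp only [c]; field_simp

theorem isLeast_inner_on_Lp_ball (hpq : p.HolderConjugate q) {α : ℝ} (hα : 0 ≤ α) (d : ι → ℝ) :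
    IsLeast {r | ∃ y : ι → ℝ, (∑ i, |y i| ^ p) ^ (1 / p) ≤ α ∧ r = ∑ i, d i * y i}
      (-(α * (∑ i, |d i| ^ q) ^ (1 / q))) := by
  refine ⟨?_, ?_⟩
  · obtain ⟨y, hy, hval⟩ := exists_Lp_le_inner_eq_neg_mul_Lq hpq hα d
    exact ⟨y, hy, hval.symm⟩
  · rintro r ⟨y, hy, rfl⟩
    refine le_trans ?_ (neg_Lq_mul_Lp_le_inner hpq d y)
    rw [neg_le_neg_iff, mul_comm α]
    exact mul_le_mul_of_nonneg_left hy
      (rpow_nonneg (sum_nonneg fun i _ => rpow_nonneg (abs_nonneg _) _) _)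

end

section
variable {S A : Type*} [Fintype S] [Fintype A]

lemma WNorm_div_rpow_one_div {w : S → A → ℝ} (hw : ∀ s a, 0 < w s a) {p : ℝ} (hp : p ≠ 0)
    (y : S → A → ℝ) : WNorm w p (fun s a => y s a / w s a ^ (1 / p)) = LpNorm p y := by
  have h (s : S) (a : A) : w s a * |y s a / w s a ^ (1 / p)| ^ p = |y s a| ^ p := by
    rw [abs_div, abs_of_pos (Real.rpow_pos_of_pos (hw s a) _),
      Real.div_rpow (abs_nonneg _) (Real.rpow_nonneg (hw s a).le _),
      ← Real.rpow_mul (hw s a).le, one_div_mul_cancel hp, Real.rpow_one,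
      mul_div_cancel₀ _ (hw s a).ne']
  simp only [WNorm, LpNorm, h]

variable [DecidableEq S] {γ : ℝ} {P : S → A → S → ℝ} {μ : S → ℝ} {π : S → A → ℝ}

lemma mdpReturn_add (R Δ : S → A → ℝ) :
    mdpReturn γ P μ π (R + Δ) = mdpReturn γ P μ π R + mdpReturn γ P μ π Δ := by
  simp only [mdpReturn, Pi.add_apply, mul_add, sum_add_distrib]

lemma exists_WNorm_sub_le_iff_exists_Lp_le {w : S → A → ℝ} (hw : ∀ s a, 0 < w s a) {p : ℝ}
    (hp : p ≠ 0) {dhat : S → A → ℝ}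
    (hdhat : ∀ s a, dhat s a = dSA γ P μ π s a / w s a ^ (1 / p)) (R₀ : S → A → ℝ) (α r : ℝ) :
    (∃ R : S → A → ℝ,
        WNorm w p (fun s a => R s a - R₀ s a) ≤ α ∧ r = mdpReturn γ P μ π R) ↔
      ∃ y : S × A → ℝ, (∑ i, |y i| ^ p) ^ (1 / p) ≤ α ∧
        r = mdpReturn γ P μ π R₀ + ∑ i, dhat i.1 i.2 * y i := by
  have hw' (s : S) (a : A) : w s a ^ (1 / p) ≠ 0 := (Real.rpow_pos_of_pos (hw s a) _).ne'
  let Φ : (S × A → ℝ) → S → A → ℝ := fun y => R₀ + fun s a => y (s, a) / w s a ^ (1 / p)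
  have hΦ : Function.Surjective Φ := fun R =>
    ⟨fun i => w i.1 i.2 ^ (1 / p) * (R i.1 i.2 - R₀ i.1 i.2), by
      ext s a
      simp only [Φ, Pi.add_apply, mul_div_cancel_left₀ _ (hw' s a), add_sub_cancel]⟩
  have hnorm (y : S × A → ℝ) :
      WNorm w p (fun s a => Φ y s a - R₀ s a) = (∑ i, |y i| ^ p) ^ (1 / p) := by
    simp only [Φ, Pi.add_apply, add_sub_cancel_left]
    rw [WNorm_div_rpow_one_div hw hp, LpNorm, Fintype.sum_prod_type]
  have hret (y : S × A → ℝ) :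
      mdpReturn γ P μ π (Φ y) = mdpReturn γ P μ π R₀ + ∑ i, dhat i.1 i.2 * y i := by
    rw [mdpReturn_add, Fintype.sum_prod_type]
    simp only [mdpReturn, hdhat, div_mul_eq_mul_div, mul_div_assoc]
  simp only [hΦ.exists, hnorm, hret]

end

theorem stmt_5_general {S A : Type*} [Fintype S] [Fintype A] [DecidableEq S]
    (γ : ℝ)
    (P : S → A → S → ℝ)
    (μ : S → ℝ)
    (π : S → A → ℝ)
    (R₀ : S → A → ℝ) (α : ℝ) (hα : 0 < α)
    (p q : ℝ) (hp : 1 < p) (hq : q = p / (p - 1))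
    (w : S → A → ℝ) (hw : ∀ s a, 0 < w s a)
    (dhat : S → A → ℝ)
    (hdhat : ∀ s a, dhat s a = dSA γ P μ π s a / (w s a) ^ (1 / p)) :
    IsLeast {r : ℝ | ∃ R : S → A → ℝ,
        WNorm w p (fun s a => R s a - R₀ s a) ≤ α ∧ r = mdpReturn γ P μ π R}
      (mdpReturn γ P μ π R₀ - α * LpNorm q dhat) := by
  have hpq : p.HolderConjugate q := (Real.holderConjugate_iff_eq_conjExponent hp).mpr hq
  have hset : {r : ℝ | ∃ R : S → A → ℝ,
        WNorm w p (fun s a => R s a - R₀ s a) ≤ α ∧ r = mdpReturn γ P μ π R} =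
      (mdpReturn γ P μ π R₀ + ·) ''
        {r | ∃ y : S × A → ℝ, (∑ i, |y i| ^ p) ^ (1 / p) ≤ α ∧ r = ∑ i, dhat i.1 i.2 * y i} := by
    ext r
    rw [Set.mem_ofPred_eq, exists_WNorm_sub_le_iff_exists_Lp_le hw hpq.ne_zero hdhat]
    constructor
    · rintro ⟨y, hy, rfl⟩
      exact ⟨_, ⟨y, hy, rfl⟩, rfl⟩
    · rintro ⟨_, ⟨y, hy, rfl⟩, rfl⟩
      exact ⟨y, hy, rfl⟩
  rw [hset, sub_eq_add_neg, LpNorm, ← Fintype.sum_prod_type' (fun s a => |dhat s a| ^ q)]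
  exact (monotone_id.const_add _).map_isLeast (isLeast_inner_on_Lp_ball hpq hα.le _)

theorem stmt_5 {S A : Type*} [Fintype S] [Fintype A] [Nonempty S] [Nonempty A] [DecidableEq S]
    (γ : ℝ) (hγ0 : 0 ≤ γ) (hγ1 : γ < 1)
    (P : S → A → S → ℝ) (hP : ∀ s a s', 0 ≤ P s a s')
    (hPsum : ∀ s a, ∑ s', P s a s' = 1)
    (μ : S → ℝ) (hμ : ∀ s, 0 < μ s) (hμsum : ∑ s, μ s = 1)
    (π : S → A → ℝ) (hπ : ∀ s a, 0 ≤ π s a) (hπsum : ∀ s, ∑ a, π s a = 1)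
    (R₀ : S → A → ℝ) (α : ℝ) (hα : 0 < α)
    (p q : ℝ) (hp : 1 < p) (hq : q = p / (p - 1))
    (w : S → A → ℝ) (hw : ∀ s a, 0 < w s a)
    (dhat : S → A → ℝ)
    (hdhat : ∀ s a, dhat s a = dSA γ P μ π s a / (w s a) ^ (1 / p)) :
    IsLeast {r : ℝ | ∃ R : S → A → ℝ,
        WNorm w p (fun s a => R s a - R₀ s a) ≤ α ∧ r = mdpReturn γ P μ π R}
      (mdpReturn γ P μ π R₀ - α * LpNorm q dhat) :=
  stmt_5_general γ P μ π R₀ α hα p q hp hq w hw dhat hdhat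
end

section
/- Fix a policy π, a nominal reward R₀ : S → A → ℝ, α > 0, and p ∈ (1,∞) with Hölder conjugate q = p/(p-1). Let R*(s,a) = R₀(s,a) - α * (d^π(s,a)/‖d^π‖_q)^(q-1) be the worst-case reward, let v* : S → ℝ be its value function v* = (I - γ P^π)⁻¹ (R*)^π where (R*)^π(s) = ∑_a π s a * R*(s,a), and define the regularized Bellman operator T : (S → ℝ) → (S → ℝ) by (T v)(s) = ∑_a π s a * R₀(s,a) + γ * ∑_{s'} P^π(s,s') * v(s') - α * (∑_a π s a * d^π(s,a)^(q-1)) / ‖d^π‖_q^(q-1). Then T v* = v*, T is a γ-contraction in the sup norm (‖T v - T u‖_∞ ≤ γ ‖v - u‖_∞ for all v, u : S → ℝ), and consequently for any v₀ : S → ℝ the iterates v_{n+1} = T v_n satisfy max_s |v_n(s) - v*(s)| ≤ γ^n * max_s |v₀(s) - v*(s)| for all n. -/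
open Finset

/-!
Averaging `R*` against `π` gives exactly the constant term of `T`, because the occupation measure
is nonnegative and so `(d / ‖d‖_q) ^ (q - 1) = d ^ (q - 1) / ‖d‖_q ^ (q - 1)`. Hence `T` is the
affine map `v ↦ r + γ P^π v` with `r = (R*)^π`. A row-stochastic matrix is `1`-Lipschitz for the
sup distance, so `T` is a `γ`-contraction; the same estimate shows that `I - γ P^π` is injective,
hence invertible, and `v* = (I - γ P^π)⁻¹ r` solves `v = r + γ P^π v`. Nonnegativity of
`(I - γ P^π)⁻¹`, needed for that of `d^π`, is a minimum principle for `x = b + γ P^π x`.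
-/

open Matrix

lemma add_smul_mulVec_inv_one_sub_smul_mulVec {K S : Type*} [CommRing K] [Fintype S]
    [DecidableEq S] {Q : Matrix S S K} {γ : K} (h : IsUnit (1 - γ • Q)) (r : S → K) :
    r + γ • Q *ᵥ ((1 - γ • Q)⁻¹ *ᵥ r) = (1 - γ • Q)⁻¹ *ᵥ r := by
  have hsolve : (1 - γ • Q) *ᵥ ((1 - γ • Q)⁻¹ *ᵥ r) = r := by
    rw [mulVec_mulVec, mul_nonsing_inv _ ((isUnit_iff_isUnit_det _).1 h), one_mulVec]
  rw [sub_mulVec, one_mulVec, smul_mulVec] at hsolve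
  nth_rw 1 [← hsolve]
  abel

lemma sum_mul_sub_mul_div_rpow {ι : Type*} [Fintype ι] (w R d : ι → ℝ) (hd : ∀ i, 0 ≤ d i)
    {N : ℝ} (hN : 0 ≤ N) (α e : ℝ) :
    ∑ i, w i * (R i - α * (d i / N) ^ e) = ∑ i, w i * R i - α * (∑ i, w i * d i ^ e) / N ^ e := by
  simp only [Real.div_rpow (hd _) hN, mul_sub, sum_sub_distrib, mul_sum, sum_div]
  congr 1
  exact sum_congr rfl fun i _ => by ring

lemma sup'_abs_sub_eq_dist {S : Type*} [Fintype S] [Nonempty S] (v u : S → ℝ) :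
    univ.sup' univ_nonempty (fun s => |v s - u s|) = dist v u :=
  le_antisymm (sup'_le _ _ fun s _ => dist_le_pi_dist v u s)
    ((dist_pi_le_iff ((abs_nonneg _).trans
      (le_sup' (fun s => |v s - u s|) (mem_univ (Classical.arbitrary S))))).2
      fun s => le_sup' (fun s => |v s - u s|) (mem_univ s))

section RowStochastic

variable {S : Type*} [Fintype S] [DecidableEq S] {Q : Matrix S S ℝ} {γ : ℝ}

lemma pmat_mem_rowStochastic {A : Type*} [Fintype A] {P : S → A → S → ℝ} {π : S → A → ℝ}
    (hP : ∀ s a s', 0 ≤ P s a s') (hPsum : ∀ s a, ∑ s', P s a s' = 1)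
    (hπ : ∀ s a, 0 ≤ π s a) (hπsum : ∀ s, ∑ a, π s a = 1) :
    Pmat P π ∈ rowStochastic ℝ S := by
  refine mem_rowStochastic_iff_sum.2
    ⟨fun s s' => sum_nonneg fun a _ => mul_nonneg (hπ s a) (hP s a s'), fun s => ?_⟩
  simp only [Pmat]
  rw [sum_comm]
  simp only [← mul_sum, hPsum, mul_one, hπsum]

lemma dist_mulVec_le_of_mem_rowStochastic (hQ : Q ∈ rowStochastic ℝ S) (v u : S → ℝ) :
    dist (Q *ᵥ v) (Q *ᵥ u) ≤ dist v u := by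
  refine (dist_pi_le_iff dist_nonneg).2 fun s => ?_
  calc dist ((Q *ᵥ v) s) ((Q *ᵥ u) s) = |∑ t, Q s t * (v t - u t)| := by
        rw [Real.dist_eq, ← Pi.sub_apply, ← mulVec_sub]
        rfl
    _ ≤ ∑ t, Q s t * |v t - u t| := by
        refine (abs_sum_le_sum_abs _ _).trans_eq (sum_congr rfl fun t _ => ?_)
        rw [abs_mul, abs_of_nonneg (hQ.1 s t)]
    _ ≤ ∑ t, Q s t * dist v u :=
        sum_le_sum fun t _ => mul_le_mul_of_nonneg_left (dist_le_pi_dist v u t) (hQ.1 s t)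
    _ = dist v u := by rw [← sum_mul, sum_row_of_mem_rowStochastic hQ, one_mul]

lemma dist_add_smul_mulVec_le (hQ : Q ∈ rowStochastic ℝ S) (hγ0 : 0 ≤ γ) (r v u : S → ℝ) :
    dist (r + γ • Q *ᵥ v) (r + γ • Q *ᵥ u) ≤ γ * dist v u := by
  rw [dist_add_left, dist_smul₀, Real.norm_of_nonneg hγ0]
  exact mul_le_mul_of_nonneg_left (dist_mulVec_le_of_mem_rowStochastic hQ v u) hγ0

lemma isUnit_one_sub_smul_of_mem_rowStochastic (hQ : Q ∈ rowStochastic ℝ S)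
    (hγ0 : 0 ≤ γ) (hγ1 : γ < 1) : IsUnit (1 - γ • Q) := by
  refine mulVec_injective_iff_isUnit.1 fun v u hvu => ?_
  have hvu' : v - γ • Q *ᵥ v = u - γ • Q *ᵥ u := by
    simpa only [sub_mulVec, one_mulVec, smul_mulVec] using hvu
  -- `v` and `u` are fixed points of the same contraction `x ↦ (v - γ Q v) + γ Q x`
  have hdist : dist v u ≤ γ * dist v u := by
    have h := dist_add_smul_mulVec_le hQ hγ0 (v - γ • Q *ᵥ v) v u
    rwa [sub_add_cancel, hvu', sub_add_cancel] at h
  exact dist_le_zero.1 (by nlinarith [dist_nonneg (x := v) (y := u)])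

-- Minimum principle: at a minimiser `s` of `x`, `x s ≥ b s + γ x s ≥ γ x s`.
lemma nonneg_of_eq_add_smul_mulVec (hQ : Q ∈ rowStochastic ℝ S) (hγ0 : 0 ≤ γ) (hγ1 : γ < 1)
    {x b : S → ℝ} (hb : 0 ≤ b) (hx : b + γ • Q *ᵥ x = x) : 0 ≤ x := by
  intro s₀
  have : Nonempty S := ⟨s₀⟩
  obtain ⟨s, hs⟩ := Finite.exists_min x
  have hmin : γ * x s ≤ x s :=
    calc γ * x s = γ * ∑ t, Q s t * x s := by
          rw [← sum_mul, sum_row_of_mem_rowStochastic hQ, one_mul]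
      _ ≤ γ * (Q *ᵥ x) s := mul_le_mul_of_nonneg_left
          (sum_le_sum fun t _ => mul_le_mul_of_nonneg_left (hs t) (hQ.1 s t)) hγ0
      _ ≤ b s + γ * (Q *ᵥ x) s := le_add_of_nonneg_left (hb s)
      _ = x s := congrFun hx s
  exact (by nlinarith : 0 ≤ x s).trans (hs s₀)

lemma inv_one_sub_smul_nonneg_of_mem_rowStochastic (hQ : Q ∈ rowStochastic ℝ S)
    (hγ0 : 0 ≤ γ) (hγ1 : γ < 1) (s s' : S) : 0 ≤ (1 - γ • Q)⁻¹ s s' := by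
  have hcol := nonneg_of_eq_add_smul_mulVec hQ hγ0 hγ1 (Pi.single_nonneg.2 zero_le_one)
    (add_smul_mulVec_inv_one_sub_smul_mulVec
      (isUnit_one_sub_smul_of_mem_rowStochastic hQ hγ0 hγ1) (Pi.single s' 1))
  simpa only [mulVec_single_one, col_apply, Pi.zero_apply] using hcol s

end RowStochastic

lemma dSA_nonneg {S A : Type*} [Fintype S] [Fintype A] [DecidableEq S] {γ : ℝ}
    {P : S → A → S → ℝ} {μ : S → ℝ} {π : S → A → ℝ} (hγ0 : 0 ≤ γ) (hγ1 : γ < 1)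
    (hP : ∀ s a s', 0 ≤ P s a s') (hPsum : ∀ s a, ∑ s', P s a s' = 1)
    (hμ : ∀ s, 0 ≤ μ s) (hπ : ∀ s a, 0 ≤ π s a) (hπsum : ∀ s, ∑ a, π s a = 1) (s : S) (a : A) :
    0 ≤ dSA γ P μ π s a :=
  mul_nonneg (sum_nonneg fun t _ => mul_nonneg (hμ t)
    (inv_one_sub_smul_nonneg_of_mem_rowStochastic
      (pmat_mem_rowStochastic hP hPsum hπ hπsum) hγ0 hγ1 t s)) (hπ s a)

lemma lpNorm_nonneg {S A : Type*} [Fintype S] [Fintype A] (r : ℝ) (x : S → A → ℝ) :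
    0 ≤ LpNorm r x :=
  Real.rpow_nonneg (sum_nonneg fun _ _ => sum_nonneg fun _ _ => Real.rpow_nonneg (abs_nonneg _) r) _

theorem stmt_10_general {S A : Type*} [Fintype S] [Fintype A] [Nonempty S] [DecidableEq S]
    (γ : ℝ) (hγ0 : 0 ≤ γ) (hγ1 : γ < 1)
    (P : S → A → S → ℝ) (hP : ∀ s a s', 0 ≤ P s a s')
    (hPsum : ∀ s a, ∑ s', P s a s' = 1)
    (μ : S → ℝ) (hμ : ∀ s, 0 < μ s)
    (π : S → A → ℝ) (hπ : ∀ s a, 0 ≤ π s a) (hπsum : ∀ s, ∑ a, π s a = 1)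
    (R₀ : S → A → ℝ) (α : ℝ)
    (q : ℝ)
    (Rstar : S → A → ℝ)
    (hRstar : ∀ s a, Rstar s a =
      R₀ s a - α * (dSA γ P μ π s a / LpNorm q (dSA γ P μ π)) ^ (q - 1))
    (vstar : S → ℝ)
    (hvstar : ∀ s, vstar s =
      ∑ s', (1 - γ • Pmat P π)⁻¹ s s' * ∑ a, π s' a * Rstar s' a)
    (T : (S → ℝ) → (S → ℝ))
    (hT : ∀ v s, T v s =
      (∑ a, π s a * R₀ s a) + γ * (∑ s', Pmat P π s s' * v s') -
        α * (∑ a, π s a * (dSA γ P μ π s a) ^ (q - 1)) /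
          (LpNorm q (dSA γ P μ π)) ^ (q - 1)) :
    T vstar = vstar ∧
    (∀ v u : S → ℝ,
      Finset.univ.sup' Finset.univ_nonempty (fun s => |T v s - T u s|) ≤
        γ * Finset.univ.sup' Finset.univ_nonempty (fun s => |v s - u s|)) ∧
    (∀ v₀ : S → ℝ, ∀ n : ℕ,
      Finset.univ.sup' Finset.univ_nonempty (fun s => |T^[n] v₀ s - vstar s|) ≤
        γ ^ n * Finset.univ.sup' Finset.univ_nonempty (fun s => |v₀ s - vstar s|)) := by
  have hQ := pmat_mem_rowStochastic hP hPsum hπ hπsum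
  set r : S → ℝ := fun s => ∑ a, π s a * Rstar s a
  have hT_affine : ∀ v, T v = r + γ • Pmat P π *ᵥ v := by
    intro v
    ext s
    rw [hT, Pi.add_apply, Pi.smul_apply, smul_eq_mul]
    simp only [r, hRstar]
    rw [sum_mul_sub_mul_div_rpow (π s) (R₀ s) (dSA γ P μ π s)
      (dSA_nonneg hγ0 hγ1 hP hPsum (fun s => (hμ s).le) hπ hπsum s) (lpNorm_nonneg _ _)]
    simp only [mulVec, dotProduct]
    ring
  have hfix : T vstar = vstar := by
    rw [show vstar = (1 - γ • Pmat P π)⁻¹ *ᵥ r from funext hvstar, hT_affine]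
    exact add_smul_mulVec_inv_one_sub_smul_mulVec
      (isUnit_one_sub_smul_of_mem_rowStochastic hQ hγ0 hγ1) r
  have hcontr : ∀ v u, dist (T v) (T u) ≤ γ * dist v u := fun v u => by
    simpa only [hT_affine] using dist_add_smul_mulVec_le hQ hγ0 r v u
  simp only [sup'_abs_sub_eq_dist]
  refine ⟨hfix, hcontr, fun v₀ n => ?_⟩
  have hlip : LipschitzWith γ.toNNReal T :=
    .of_dist_le_mul fun v u => by simpa only [Real.coe_toNNReal _ hγ0] using hcontr v u
  simpa only [Function.iterate_fixed hfix, NNReal.coe_pow, Real.coe_toNNReal _ hγ0] using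
    (hlip.iterate n).dist_le_mul v₀ vstar

theorem stmt_10 {S A : Type*} [Fintype S] [Fintype A] [Nonempty S] [Nonempty A] [DecidableEq S]
    (γ : ℝ) (hγ0 : 0 ≤ γ) (hγ1 : γ < 1)
    (P : S → A → S → ℝ) (hP : ∀ s a s', 0 ≤ P s a s')
    (hPsum : ∀ s a, ∑ s', P s a s' = 1)
    (μ : S → ℝ) (hμ : ∀ s, 0 < μ s) (hμsum : ∑ s, μ s = 1)
    (π : S → A → ℝ) (hπ : ∀ s a, 0 ≤ π s a) (hπsum : ∀ s, ∑ a, π s a = 1)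
    (R₀ : S → A → ℝ) (α : ℝ) (hα : 0 < α)
    (p q : ℝ) (hp : 1 < p) (hq : q = p / (p - 1))
    (Rstar : S → A → ℝ)
    (hRstar : ∀ s a, Rstar s a =
      R₀ s a - α * (dSA γ P μ π s a / LpNorm q (dSA γ P μ π)) ^ (q - 1))
    (vstar : S → ℝ)
    (hvstar : ∀ s, vstar s =
      ∑ s', (1 - γ • Pmat P π)⁻¹ s s' * ∑ a, π s' a * Rstar s' a)
    (T : (S → ℝ) → (S → ℝ))
    (hT : ∀ v s, T v s =
      (∑ a, π s a * R₀ s a) + γ * (∑ s', Pmat P π s s' * v s') -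
        α * (∑ a, π s a * (dSA γ P μ π s a) ^ (q - 1)) /
          (LpNorm q (dSA γ P μ π)) ^ (q - 1)) :
    T vstar = vstar ∧
    (∀ v u : S → ℝ,
      Finset.univ.sup' Finset.univ_nonempty (fun s => |T v s - T u s|) ≤
        γ * Finset.univ.sup' Finset.univ_nonempty (fun s => |v s - u s|)) ∧
    (∀ v₀ : S → ℝ, ∀ n : ℕ,
      Finset.univ.sup' Finset.univ_nonempty (fun s => |T^[n] v₀ s - vstar s|) ≤
        γ ^ n * Finset.univ.sup' Finset.univ_nonempty (fun s => |v₀ s - vstar s|)) :=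
  stmt_10_general γ hγ0 hγ1 P hP hPsum μ hμ π hπ hπsum R₀ α q Rstar hRstar vstar hvstar T hT
end

section
/- Fix a state-action pair (s,a) and define f : (S → A → ℝ) → ℝ by f(π) = (μᵀ (I - γ P^π)⁻¹)(s) * π(s,a), using Mathlib's matrix inverse (which at every policy is the genuine inverse, since I - γ P^π is invertible there). Then f is differentiable at every policy π, and for all policies π and π' the quadratic Taylor remainder is bounded: |f(π') - f(π) - Df(π)[π' - π]| ≤ (γ * |A| / (1-γ)³) * ∑_{s',a'} (π'(s',a') - π(s',a'))², where Df(π) is the Fréchet derivative of f at π. That is, d^π(s,a) is a (2γ|A|/(1-γ)³)-smooth function of the policy. -/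
open Finset

/-- stationary policy predicate -/
def IsPolicy {S A : Type*} [Fintype A] (π : S → A → ℝ) : Prop :=
  (∀ s a, 0 ≤ π s a) ∧ ∀ s, ∑ a, π s a = 1

/-!
Write `N π = (1 - γ • P^π)⁻¹`. In the `ℓ∞`-operator norm (maximal row sum) `P^π` has norm at most
`1` at a policy, so `N π` is a Neumann series with `‖N π‖ ≤ (1 - γ)⁻¹`, and matrix inversion is
differentiable there with derivative `N (γ • dP) N`. The second-order resolvent expansion
`N' = N + N E N + N' E N E N`, with `E = γ • P^(π' - π)`, turns the Taylor remainder of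
`d^π(s,a) = (μᵀ N π)_s π(s,a)` into `(μᵀ N E N)_s Δ(s,a) + (μᵀ N' E N E N)_s π'(s,a)` exactly.
If every row of `Δ = π' - π` has `ℓ¹`-norm at most `δ`, then `‖E‖ ≤ γ δ` and `|Δ(s,a)| ≤ δ`, so the
remainder is at most `γ δ² / (1 - γ)² + γ² δ² / (1 - γ)³ = γ δ² / (1 - γ)³`, and Cauchy–Schwarz
allows `δ² = |A| ‖Δ‖₂²`.
-/

open Finset Matrix

attribute [local instance] Matrix.linftyOpNormedAddCommGroup Matrix.linftyOpNormedRing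
  Matrix.linftyOpNormedAlgebra

theorem Ring.inverse_second_order_expansion {R : Type*} [Ring R] {x y : R} (hx : IsUnit x)
    (hy : IsUnit y) :
    Ring.inverse y = Ring.inverse x + Ring.inverse x * (x - y) * Ring.inverse x
      + Ring.inverse y * (x - y) * Ring.inverse x * (x - y) * Ring.inverse x := by
  have h : Ring.inverse y = Ring.inverse x + Ring.inverse y * (x - y) * Ring.inverse x := by
    rw [← Ring.inverse_sub_inverse ⟨fun _ => hx, fun _ => hy⟩, add_sub_cancel]
  conv_lhs => rw [h, h]
  noncomm_ring

theorem norm_inverse_one_sub_le {R : Type*} [NormedRing R] [NormOneClass R]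
    [HasSummableGeomSeries R] {x : R} {q : ℝ} (hx : ‖x‖ ≤ q) (hq : q < 1) :
    ‖Ring.inverse (1 - x)‖ ≤ (1 - q)⁻¹ := by
  rw [← geom_series_eq_inverse x (hx.trans_lt hq)]
  refine (tsum_geometric_le_of_norm_lt_one x (hx.trans_lt hq)).trans ?_
  rw [norm_one, sub_self, zero_add]
  exact inv_anti₀ (by linarith) (by linarith)

theorem sum_abs_le_sqrt_card_mul_sum_sum_sq {S A : Type*} [Fintype S] [Fintype A]
    (x : S → A → ℝ) (t : S) :
    ∑ a, |x t a| ≤ √(Fintype.card A * ∑ u, ∑ a, x u a ^ 2) := by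
  refine Real.le_sqrt_of_sq_le (sq_sum_le_card_mul_sum_sq.trans ?_)
  rw [card_univ]
  gcongr
  simp only [sq_abs]
  exact single_le_sum (f := fun u => ∑ a, x u a ^ 2)
    (fun _ _ => sum_nonneg fun _ _ => sq_nonneg _) (mem_univ t)

namespace Matrix

variable {m n : Type*} [Fintype m] [Fintype n]

theorem linfty_opNorm_le_of_rows {X : Matrix m n ℝ} {c : ℝ} (hc : 0 ≤ c)
    (hX : ∀ i, ∑ j, |X i j| ≤ c) : ‖X‖ ≤ c := by
  rw [linfty_opNorm_def, ← NNReal.coe_mk c hc, NNReal.coe_le_coe, Finset.sup_le_iff]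
  intro i _
  rw [← NNReal.coe_le_coe]
  push_cast
  exact hX i

theorem abs_apply_le_linfty_opNorm (X : Matrix m n ℝ) (i : m) (j : n) : |X i j| ≤ ‖X‖ := by
  rw [linfty_opNorm_def]
  calc |X i j| ≤ ∑ k, |X i k| :=
        single_le_sum (f := fun k => |X i k|) (fun _ _ => abs_nonneg _) (mem_univ j)
    _ = ((∑ k, ‖X i k‖₊ : NNReal) : ℝ) := by push_cast; rfl
    _ ≤ _ := NNReal.coe_le_coe.2 (Finset.le_sup (f := fun i => ∑ k, ‖X i k‖₊) (mem_univ i))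

end Matrix

namespace MDP

variable {S A : Type*} [Fintype S] [Fintype A] {γ : ℝ} {P : S → A → S → ℝ}

noncomputable def pmatCLM (P : S → A → S → ℝ) : (S → A → ℝ) →L[ℝ] Matrix S S ℝ :=
  LinearMap.toContinuousLinearMap
    { toFun := Pmat P
      map_add' := fun x y => by ext; simp [Pmat, add_mul, sum_add_distrib]
      map_smul' := fun c x => by ext; simp [Pmat, mul_sum, mul_assoc] }

noncomputable def vecMulApplyCLM (μ : S → ℝ) (s : S) : Matrix S S ℝ →L[ℝ] ℝ :=
  LinearMap.toContinuousLinearMap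
    { toFun := fun X => (μ ᵥ* X) s
      map_add' := fun X Y => by simp [vecMul_add]
      map_smul' := fun c X => by simp [vecMul_smul] }

theorem abs_vecMul_apply_le {μ : S → ℝ} (hμ : ∀ t, 0 ≤ μ t) (hμsum : ∑ t, μ t = 1)
    (X : Matrix S S ℝ) (s : S) : |(μ ᵥ* X) s| ≤ ‖X‖ :=
  calc |(μ ᵥ* X) s| ≤ ∑ t, μ t * |X t s| := by
        refine (abs_sum_le_sum_abs _ _).trans_eq (sum_congr rfl fun t _ => ?_)
        rw [abs_mul, abs_of_nonneg (hμ t)]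
    _ ≤ ∑ t, μ t * ‖X‖ :=
        sum_le_sum fun t _ => mul_le_mul_of_nonneg_left (abs_apply_le_linfty_opNorm X t s) (hμ t)
    _ = ‖X‖ := by rw [← sum_mul, hμsum, one_mul]

theorem norm_Pmat_le (hP : ∀ s a s', 0 ≤ P s a s') (hPsum : ∀ s a, ∑ s', P s a s' = 1)
    {x : S → A → ℝ} {c : ℝ} (hc : 0 ≤ c) (hx : ∀ t, ∑ a, |x t a| ≤ c) : ‖Pmat P x‖ ≤ c := by
  refine linfty_opNorm_le_of_rows hc fun t => le_trans ?_ (hx t)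
  calc ∑ u, |∑ a, x t a * P t a u| ≤ ∑ u, ∑ a, |x t a| * P t a u :=
        sum_le_sum fun u _ => (abs_sum_le_sum_abs _ _).trans_eq
          (sum_congr rfl fun a _ => by rw [abs_mul, abs_of_nonneg (hP t a u)])
    _ = ∑ a, |x t a| := by
        rw [sum_comm]
        simp only [← mul_sum, hPsum, mul_one]

theorem norm_Pmat_le_one (hP : ∀ s a s', 0 ≤ P s a s') (hPsum : ∀ s a, ∑ s', P s a s' = 1)
    {π : S → A → ℝ} (hπ : IsPolicy π) : ‖Pmat P π‖ ≤ 1 :=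
  norm_Pmat_le hP hPsum zero_le_one fun t => by
    simp only [abs_of_nonneg (hπ.1 t _), hπ.2 t, le_refl]

variable [DecidableEq S] {μ : S → ℝ}

theorem dPi_eq (γ : ℝ) (P : S → A → S → ℝ) (μ : S → ℝ) (π : S → A → ℝ) (s : S) :
    dPi γ P μ π s = (μ ᵥ* Ring.inverse (1 - γ • Pmat P π)) s := by
  rw [← nonsing_inv_eq_ringInverse]
  rfl

variable (γ P μ) in
open ContinuousLinearMap in
noncomputable def dSAFDeriv (π : S → A → ℝ) (s : S) (a : A) : (S → A → ℝ) →L[ℝ] ℝ :=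
  dPi γ P μ π s • (proj a ∘L (proj s : (S → A → ℝ) →L[ℝ] A → ℝ)) + π s a • (vecMulApplyCLM μ s ∘L
    mulLeftRight ℝ (Matrix S S ℝ) (Ring.inverse (1 - γ • Pmat P π))
      (Ring.inverse (1 - γ • Pmat P π)) ∘L (γ • pmatCLM P))

theorem dSAFDeriv_apply (π : S → A → ℝ) (s : S) (a : A) (Δ : S → A → ℝ) :
    dSAFDeriv γ P μ π s a Δ = dPi γ P μ π s * Δ s a + π s a * (μ ᵥ*
      (Ring.inverse (1 - γ • Pmat P π) * (γ • Pmat P Δ) * Ring.inverse (1 - γ • Pmat P π))) s :=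
  rfl

theorem hasFDerivAt_dSA {π : S → A → ℝ} (hπ : IsUnit (1 - γ • Pmat P π)) (s : S) (a : A) :
    HasFDerivAt (fun x => dSA γ P μ x s a) (dSAFDeriv γ P μ π s a) π := by
  have hM : HasFDerivAt (fun x => 1 - γ • Pmat P x) (-(γ • pmatCLM P)) π :=
    ((hasFDerivAt_const (1 : Matrix S S ℝ) π).sub
      ((pmatCLM P).hasFDerivAt.const_smul γ)).congr_fderiv (zero_sub _)
  have hN := (hasFDerivAt_ringInverse (𝕜 := ℝ) hπ.unit).comp π hM
  have hp := (hasFDerivAt_apply (𝕜 := ℝ) a (π s)).comp π (hasFDerivAt_apply (𝕜 := ℝ) s π)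
  have hf : (fun x => dSA γ P μ x s a) =
      fun x => (μ ᵥ* Ring.inverse (1 - γ • Pmat P x)) s * x s a := by
    funext x
    rw [dSA, dPi_eq]
  rw [hf]
  refine (((vecMulApplyCLM μ s).hasFDerivAt.comp π hN).mul hp).congr_fderiv ?_
  ext Δ
  rw [← Ring.inverse_unit hπ.unit, hπ.unit_spec, dSAFDeriv_apply, dPi_eq]
  -- The topology of `Matrix` and that of the `ℓ∞`-norm agree only after unfolding instances,
  -- which blocks `simp` on the composed maps; `change` unfolds them.
  change _ * Δ s a + π s a * (μ ᵥ* -(Ring.inverse (1 - γ • Pmat P π) * -(γ • Pmat P Δ)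
    * Ring.inverse (1 - γ • Pmat P π))) s = _
  rw [mul_neg, neg_mul, neg_neg]
  rfl

theorem dSA_sub_sub_dSAFDeriv {π π' : S → A → ℝ} (hπ : IsUnit (1 - γ • Pmat P π))
    (hπ' : IsUnit (1 - γ • Pmat P π')) (s : S) (a : A) :
    dSA γ P μ π' s a - dSA γ P μ π s a - dSAFDeriv γ P μ π s a (π' - π) =
      (μ ᵥ* (Ring.inverse (1 - γ • Pmat P π) * (γ • Pmat P (π' - π))
        * Ring.inverse (1 - γ • Pmat P π))) s * (π' s a - π s a)
      + (μ ᵥ* (Ring.inverse (1 - γ • Pmat P π') * (γ • Pmat P (π' - π))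
        * Ring.inverse (1 - γ • Pmat P π) * (γ • Pmat P (π' - π))
        * Ring.inverse (1 - γ • Pmat P π))) s * π' s a := by
  have hE : (1 - γ • Pmat P π) - (1 - γ • Pmat P π') = γ • Pmat P (π' - π) := by
    rw [show Pmat P (π' - π) = Pmat P π' - Pmat P π from map_sub (pmatCLM P) π' π, smul_sub]
    abel
  have hN' := Ring.inverse_second_order_expansion hπ hπ'
  rw [hE] at hN'
  simp only [dSA, dPi_eq, dSAFDeriv_apply, Pi.sub_apply]
  conv_lhs => rw [hN']
  simp only [vecMul_add, Pi.add_apply]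
  ring

theorem norm_smul_Pmat_le (hγ0 : 0 ≤ γ) (hP : ∀ s a s', 0 ≤ P s a s')
    (hPsum : ∀ s a, ∑ s', P s a s' = 1) {π : S → A → ℝ} (hπ : IsPolicy π) :
    ‖γ • Pmat P π‖ ≤ γ := by
  rw [norm_smul, Real.norm_of_nonneg hγ0]
  exact mul_le_of_le_one_right hγ0 (norm_Pmat_le_one hP hPsum hπ)

theorem isUnit_one_sub_smul_Pmat (hγ0 : 0 ≤ γ) (hγ1 : γ < 1) (hP : ∀ s a s', 0 ≤ P s a s')
    (hPsum : ∀ s a, ∑ s', P s a s' = 1) {π : S → A → ℝ} (hπ : IsPolicy π) :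
    IsUnit (1 - γ • Pmat P π) :=
  isUnit_one_sub_of_norm_lt_one ((norm_smul_Pmat_le hγ0 hP hPsum hπ).trans_lt hγ1)

variable [Nonempty S]

theorem norm_inverse_one_sub_smul_Pmat_le (hγ0 : 0 ≤ γ) (hγ1 : γ < 1)
    (hP : ∀ s a s', 0 ≤ P s a s') (hPsum : ∀ s a, ∑ s', P s a s' = 1) {π : S → A → ℝ}
    (hπ : IsPolicy π) : ‖Ring.inverse (1 - γ • Pmat P π)‖ ≤ (1 - γ)⁻¹ :=
  norm_inverse_one_sub_le (norm_smul_Pmat_le hγ0 hP hPsum hπ) hγ1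

theorem abs_dSA_sub_sub_dSAFDeriv_le (hγ0 : 0 ≤ γ) (hγ1 : γ < 1)
    (hP : ∀ s a s', 0 ≤ P s a s') (hPsum : ∀ s a, ∑ s', P s a s' = 1)
    (hμ : ∀ t, 0 ≤ μ t) (hμsum : ∑ t, μ t = 1)
    {π π' : S → A → ℝ} (hπ : IsPolicy π) (hπ' : IsPolicy π') {δ : ℝ}
    (hδ : ∀ t, ∑ a, |π' t a - π t a| ≤ δ) (s : S) (a : A) :
    |dSA γ P μ π' s a - dSA γ P μ π s a - dSAFDeriv γ P μ π s a (π' - π)| ≤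
      γ * δ ^ 2 / (1 - γ) ^ 3 := by
  set N := Ring.inverse (1 - γ • Pmat P π)
  set N' := Ring.inverse (1 - γ • Pmat P π')
  set E := γ • Pmat P (π' - π)
  have hδ0 : 0 ≤ δ := (sum_nonneg fun _ _ => abs_nonneg _).trans (hδ s)
  have hE : ‖E‖ ≤ γ * δ := by
    rw [norm_smul, Real.norm_of_nonneg hγ0]
    exact mul_le_mul_of_nonneg_left (norm_Pmat_le hP hPsum hδ0 hδ) hγ0
  have hN : ‖N‖ ≤ (1 - γ)⁻¹ := norm_inverse_one_sub_smul_Pmat_le hγ0 hγ1 hP hPsum hπ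
  have hN' : ‖N'‖ ≤ (1 - γ)⁻¹ := norm_inverse_one_sub_smul_Pmat_le hγ0 hγ1 hP hPsum hπ'
  have hΔ : |π' s a - π s a| ≤ δ :=
    (single_le_sum (f := fun b => |π' s b - π s b|) (fun _ _ => abs_nonneg _) (mem_univ a)).trans
      (hδ s)
  have hπ'sa : |π' s a| ≤ 1 := by
    rw [abs_of_nonneg (hπ'.1 s a), ← hπ'.2 s]
    exact single_le_sum (fun b _ => hπ'.1 s b) (mem_univ a)
  rw [dSA_sub_sub_dSAFDeriv (isUnit_one_sub_smul_Pmat hγ0 hγ1 hP hPsum hπ)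
    (isUnit_one_sub_smul_Pmat hγ0 hγ1 hP hPsum hπ')]
  calc _ ≤ |(μ ᵥ* (N * E * N)) s| * |π' s a - π s a|
          + |(μ ᵥ* (N' * E * N * E * N)) s| * |π' s a| := by
        rw [← abs_mul, ← abs_mul]
        exact abs_add_le _ _
    _ ≤ (‖N‖ * ‖E‖ * ‖N‖) * δ + (‖N'‖ * ‖E‖ * ‖N‖ * ‖E‖ * ‖N‖) * 1 := by
        gcongr
        · exact (abs_vecMul_apply_le hμ hμsum _ s).trans norm_mul₃_le
        · refine (abs_vecMul_apply_le hμ hμsum _ s).trans (norm_mul₃_le.trans ?_)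
          gcongr
          exact norm_mul₃_le
    _ ≤ ((1 - γ)⁻¹ * (γ * δ) * (1 - γ)⁻¹) * δ
          + ((1 - γ)⁻¹ * (γ * δ) * (1 - γ)⁻¹ * (γ * δ) * (1 - γ)⁻¹) * 1 := by
        gcongr
    _ = γ * δ ^ 2 / (1 - γ) ^ 3 := by
        field_simp
        ring

end MDP

open MDP in
theorem stmt_16_general {S A : Type*} [Fintype S] [Fintype A] [Nonempty S] [DecidableEq S]
    (γ : ℝ) (hγ0 : 0 ≤ γ) (hγ1 : γ < 1)
    (P : S → A → S → ℝ) (hP : ∀ s a s', 0 ≤ P s a s')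
    (hPsum : ∀ s a, ∑ s', P s a s' = 1)
    (μ : S → ℝ) (hμ : ∀ s, 0 < μ s) (hμsum : ∑ s, μ s = 1)
    (s : S) (a : A)
    (f : (S → A → ℝ) → ℝ)
    (hf : ∀ π : S → A → ℝ, f π = dPi γ P μ π s * π s a) :
    (∀ π : S → A → ℝ, IsPolicy π → DifferentiableAt ℝ f π) ∧
    (∀ π π' : S → A → ℝ, IsPolicy π → IsPolicy π' →
      |f π' - f π - fderiv ℝ f π (π' - π)| ≤
        (γ * (Fintype.card A : ℝ) / (1 - γ) ^ 3) *
          ∑ s', ∑ a', (π' s' a' - π s' a') ^ 2) := by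
  obtain rfl : f = fun π => dSA γ P μ π s a := funext hf
  have hderiv (π : S → A → ℝ) (hπ : IsPolicy π) :=
    hasFDerivAt_dSA (μ := μ) (isUnit_one_sub_smul_Pmat hγ0 hγ1 hP hPsum hπ) s a
  refine ⟨fun π hπ => (hderiv π hπ).differentiableAt, fun π π' hπ hπ' => ?_⟩
  rw [(hderiv π hπ).fderiv]
  have hbound := abs_dSA_sub_sub_dSAFDeriv_le hγ0 hγ1 hP hPsum (fun t => (hμ t).le) hμsum hπ hπ'
    (fun t => sum_abs_le_sqrt_card_mul_sum_sum_sq (π' - π) t) s a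
  rw [Real.sq_sqrt (by positivity)] at hbound
  convert hbound using 1
  simp only [Pi.sub_apply]
  ring

theorem stmt_16 {S A : Type*} [Fintype S] [Fintype A] [Nonempty S] [Nonempty A] [DecidableEq S]
    (γ : ℝ) (hγ0 : 0 ≤ γ) (hγ1 : γ < 1)
    (P : S → A → S → ℝ) (hP : ∀ s a s', 0 ≤ P s a s')
    (hPsum : ∀ s a, ∑ s', P s a s' = 1)
    (μ : S → ℝ) (hμ : ∀ s, 0 < μ s) (hμsum : ∑ s, μ s = 1)
    (s : S) (a : A)
    (f : (S → A → ℝ) → ℝ)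
    (hf : ∀ π : S → A → ℝ, f π = dPi γ P μ π s * π s a) :
    (∀ π : S → A → ℝ, IsPolicy π → DifferentiableAt ℝ f π) ∧
    (∀ π π' : S → A → ℝ, IsPolicy π → IsPolicy π' →
      |f π' - f π - fderiv ℝ f π (π' - π)| ≤
        (γ * (Fintype.card A : ℝ) / (1 - γ) ^ 3) *
          ∑ s', ∑ a', (π' s' a' - π s' a') ^ 2) :=
  stmt_16_general γ hγ0 hγ1 P hP hPsum μ hμ hμsum s a f hf
end
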